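/- Let Θ be a space of input histories over (E, I) with output sets O. An extended function F̂ ∈ ExtFun(Θ,O), viewed as a function from the poset Ext(Θ) to the poset PFun(E,O) of all partial functions over (E,O) (with dom(F̂(k)) = dom(k) for all k ∈ Ext(Θ)), is an extended causal function — i.e. F̂ = Ext(f) for some causal function f ∈ CausFun(Θ,O) — if and only if F̂ is continuous, where both Ext(Θ) and PFun(E,O) carry the lowerset topology, whose open sets are exactly the lower sets. -/

import Mathlib

namespace Caus

/-- Partial functions over events `E` with value family `V`:
each event is assigned an optional value. -/
abbrev PF (E : Type) (V : E → Type) : Type := ∀ ω : E, Option (V ω)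

variable {E : Type} {I O : E → Type}

/-- The total function `k` viewed as a partial function with full domain. -/
def toPF (k : ∀ ω : E, I ω) : PF E I := fun ω => some (k ω)

/-- Domain of a partial function. -/
def dom (h : PF E I) : Set E := {ω | (h ω).isSome}

/-- The order on partial functions: `h' ≤ h` iff `dom h' ⊆ dom h` and they agree on `dom h'`. -/
def le (h' h : PF E I) : Prop := ∀ ω : E, (h' ω).isSome → h' ω = h ω

/-- Compatibility: agreeing on the intersection of the domains. -/
def Compat (h h' : PF E I) : Prop :=
  ∀ ω : E, (h ω).isSome → (h' ω).isSome → h ω = h' ω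

/-- Join of two partial functions (union, when they are compatible). -/
def join (h h' : PF E I) : PF E I := fun ω => (h ω).orElse fun _ => h' ω

/-- `k` is the join (union) of the set `S` of partial functions. -/
def IsJoinOf (k : PF E I) (S : Set (PF E I)) : Prop :=
  ∀ (ω : E) (x : I ω), k ω = some x ↔ ∃ h ∈ S, h ω = some x

/-- `Ext Θ`: joins of nonempty pairwise-compatible subsets of `Θ`. -/
def Ext (Θ : Set (PF E I)) : Set (PF E I) :=
  {k | ∃ S ⊆ Θ, S.Nonempty ∧ S.Pairwise Compat ∧ IsJoinOf k S}

/-- A space of input histories: every `h ∈ Θ` is ∨-prime in `Ext Θ`. -/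
def IsSpace (Θ : Set (PF E I)) : Prop :=
  ∀ h ∈ Θ, ∀ k ∈ Ext Θ, ∀ k' ∈ Ext Θ, Compat k k' →
    le h (join k k') → le h k ∨ le h k'

/-- Tip events of `h` in `Θ`. -/
def tips (Θ : Set (PF E I)) (h : PF E I) : Set E :=
  {ω | ω ∈ dom h ∧ ∀ h' ∈ Θ, le h' h → h' ≠ h → ω ∉ dom h'}

/-- Extended functions: the output partial function has the same domain as the input. -/
def IsExtFun (Θ : Set (PF E I)) (F : PF E I → PF E O) : Prop :=
  ∀ k ∈ Ext Θ, dom (F k) = dom k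

/-- The consistency condition for extended functions. -/
def Consistent (Θ : Set (PF E I)) (F : PF E I → PF E O) : Prop :=
  ∀ k ∈ Ext Θ, ∀ k' ∈ Ext Θ, le k' k → le (F k') (F k)

/-- `h` and `h'` are constrained at `ω`: both have tip `ω` and every consistent
extended function with binary outputs takes the same value at `ω` on them. -/
def Constr (Θ : Set (PF E I)) (ω : E) (h h' : PF E I) : Prop :=
  h ∈ Θ ∧ h' ∈ Θ ∧ ω ∈ tips Θ h ∧ ω ∈ tips Θ h' ∧
  ∀ F : PF E I → PF E (fun _ => Bool),
    IsExtFun Θ F → Consistent Θ F → F h ω = F h' ω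

/-- Causal function conditions: `f h` is an assignment of outputs to the tips of `h`,
with equal outputs on histories constrained at an event. -/
def IsCausFun (Θ : Set (PF E I)) (f : PF E I → PF E O) : Prop :=
  (∀ h ∈ Θ, dom (f h) = tips Θ h) ∧
  ∀ (ω : E) (h h' : PF E I), Constr Θ ω h h' → f h ω = f h' ω

/-- Causal functions for `Θ` with outputs `W` (normalized to `none` outside `Θ`). -/
def CausFunSet (Θ : Set (PF E I)) (W : E → Type) : Set (PF E I → PF E W) :=
  {f | IsCausFun Θ f ∧ ∀ h ∉ Θ, ∀ ω : E, f h ω = none}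

open Classical in
/-- The extended causal function `Ext f` of a causal function `f`. -/
noncomputable def extCF (Θ : Set (PF E I)) (f : PF E I → PF E O) : PF E I → PF E O :=
  fun k ω =>
    if hh : ∃ h, h ∈ Θ ∧ le h k ∧ ω ∈ tips Θ h then f hh.choose ω else none

open Classical in
/-- `Prime F̂`: the causal function underlying a consistent extended function. -/
noncomputable def primeCF (Θ : Set (PF E I)) (F : PF E I → PF E O) : PF E I → PF E O :=
  fun h ω => if h ∈ Θ ∧ ω ∈ tips Θ h then F h ω else none

open Classical in
/-- Restriction of a causal function to a lowerset (normalized outside it). -/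
noncomputable def restrictCF (lam : Set (PF E I)) (f : PF E I → PF E O) :
    PF E I → PF E O :=
  fun h => if h ∈ lam then f h else fun _ => none

/-- The free-choice condition. -/
def FreeChoice (Θ : Set (PF E I)) : Prop := ∀ k : ∀ ω : E, I ω, toPF k ∈ Ext Θ

/-- Tightness. -/
def Tight (Θ : Set (PF E I)) : Prop :=
  ∀ k ∈ Ext Θ, ∀ ω ∈ dom k, ∃! h, h ∈ Θ ∧ le h k ∧ ω ∈ tips Θ h

/-- Maximal extended input histories. -/
def maxExt (Θ : Set (PF E I)) : Set (PF E I) :=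
  {k | k ∈ Ext Θ ∧ ∀ k' ∈ Ext Θ, le k k' → k' = k}

/-- Lowersets (downward-closed subsets) of a space `Θ`. -/
def IsLowersetOf (Θ lam : Set (PF E I)) : Prop :=
  lam ⊆ Θ ∧ ∀ h ∈ lam, ∀ h' ∈ Θ, le h' h → h' ∈ lam


/-- The lowerset topology associated to a relation: open sets are the lower sets. -/
def lowerTopology {α : Type} (r : α → α → Prop) : TopologicalSpace α where
  IsOpen U := ∀ x ∈ U, ∀ y, r y x → y ∈ U
  isOpen_univ := fun _ _ y _ => Set.mem_univ y
  isOpen_inter := fun _ _ hs ht x hx y hyx => ⟨hs x hx.1 y hyx, ht x hx.2 y hyx⟩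
  isOpen_sUnion := fun _ hS x hx y hyx => by
    obtain ⟨t, htS, hxt⟩ := hx
    exact ⟨t, htS, hS t htS x hxt y hyx⟩

/-!
Continuity between lowerset topologies is monotonicity, which for `F̂` is the consistency
condition. `Ext f` is consistent because two histories below a common `k ∈ Ext Θ` with a
common tip `ω` are constrained at `ω`: every consistent `F̂` gives both of them the value
`F̂(k)(ω)`. Conversely, a consistent `F̂` is `Ext` of its restriction to tips: since `E` is
finite, every `ω ∈ dom k` is a tip of some history below `k`, and constrained histories
receive equal outputs under `F̂`, as the Boolean extended function `k ↦ [F̂(k)(ω) = F̂(h)(ω)]`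
shows.
-/

theorem le.refl (h : PF E I) : le h h := fun _ _ => rfl

theorem le.trans {a b c : PF E I} (hab : le a b) (hbc : le b c) : le a c := by
  intro ω hs
  rw [hab ω hs]
  exact hbc ω (hab ω hs ▸ hs)

theorem le.dom_subset {h' h : PF E I} (hle : le h' h) : dom h' ⊆ dom h :=
  fun ω hs => (hle ω hs ▸ hs : (h ω).isSome)

theorem le.eq_of_dom_subset {h' h : PF E I} (hle : le h' h) (hdom : dom h ⊆ dom h') :
    h' = h := by
  funext ω
  by_cases hs : (h' ω).isSome
  · exact hle ω hs
  · have hs' : ¬ (h ω).isSome := fun h'' => hs (hdom h'')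
    rw [Option.not_isSome_iff_eq_none] at hs hs'
    rw [hs, hs']

theorem IsJoinOf.le_of_mem {S : Set (PF E I)} {k h : PF E I} (hj : IsJoinOf k S)
    (hh : h ∈ S) : le h k := by
  intro ω hs
  obtain ⟨x, hx⟩ := Option.isSome_iff_exists.mp hs
  rw [hx, (hj ω x).mpr ⟨h, hh, hx⟩]

theorem mem_Ext_of_mem {Θ : Set (PF E I)} {h : PF E I} (hh : h ∈ Θ) : h ∈ Ext Θ :=
  ⟨{h}, Set.singleton_subset_iff.mpr hh, Set.singleton_nonempty h,
    Set.pairwise_singleton _ _, fun ω x => by simp⟩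

theorem IsExtFun.isSome_iff {Θ : Set (PF E I)} {F : PF E I → PF E O} (hF : IsExtFun Θ F)
    {k : PF E I} (hk : k ∈ Ext Θ) (ω : E) : (F k ω).isSome ↔ (k ω).isSome :=
  Set.ext_iff.mp (hF k hk) ω

def mapOutputs {W : E → Type} (g : ∀ ω, O ω → W ω) (F : PF E I → PF E O) :
    PF E I → PF E W :=
  fun k ω => (F k ω).map (g ω)

theorem IsExtFun.mapOutputs {W : E → Type} {Θ : Set (PF E I)} {F : PF E I → PF E O}
    (hF : IsExtFun Θ F) (g : ∀ ω, O ω → W ω) : IsExtFun Θ (mapOutputs g F) := by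
  intro k hk
  ext ω
  change ((F k ω).map (g ω)).isSome ↔ (k ω).isSome
  rw [Option.isSome_map]
  exact hF.isSome_iff hk ω

theorem Consistent.mapOutputs {W : E → Type} {Θ : Set (PF E I)} {F : PF E I → PF E O}
    (hF : Consistent Θ F) (g : ∀ ω, O ω → W ω) : Consistent Θ (mapOutputs g F) := by
  intro k hk k' hk' hle ω hs
  simp only [Caus.mapOutputs, Option.isSome_map] at hs ⊢
  rw [hF k hk k' hk' hle ω hs]

theorem exists_le_mem_tips [Finite E] {Θ : Set (PF E I)} {h₀ : PF E I} (h₀Θ : h₀ ∈ Θ)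
    {ω : E} (hω : ω ∈ dom h₀) : ∃ h ∈ Θ, le h h₀ ∧ ω ∈ tips Θ h := by
  obtain ⟨h, ⟨hΘ, hle, hdom⟩, hmin⟩ := (measure fun h : PF E I => (dom h).ncard).wf.has_min
    {h | h ∈ Θ ∧ le h h₀ ∧ ω ∈ dom h} ⟨h₀, h₀Θ, le.refl h₀, hω⟩
  refine ⟨h, hΘ, hle, hdom, fun h' h'Θ hle' hne hdom' => ?_⟩
  have hssub : dom h' ⊂ dom h :=
    ⟨hle'.dom_subset, fun hsub => hne (hle'.eq_of_dom_subset hsub)⟩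
  exact hmin h' ⟨h'Θ, hle'.trans hle, hdom'⟩ (Set.ncard_lt_ncard hssub (Set.toFinite _))

theorem exists_le_mem_tips_of_mem_Ext [Finite E] {Θ : Set (PF E I)} {k : PF E I}
    (hk : k ∈ Ext Θ) {ω : E} (hω : ω ∈ dom k) : ∃ h ∈ Θ, le h k ∧ ω ∈ tips Θ h := by
  obtain ⟨S, hSΘ, -, -, hj⟩ := hk
  obtain ⟨x, hx⟩ := Option.isSome_iff_exists.mp hω
  obtain ⟨h₀, h₀S, h₀x⟩ := (hj ω x).mp hx
  obtain ⟨h, hΘ, hle, htip⟩ :=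
    exists_le_mem_tips (hSΘ h₀S) (show (h₀ ω).isSome by simp [h₀x])
  exact ⟨h, hΘ, hle.trans (hj.le_of_mem h₀S), htip⟩

theorem Consistent.apply_eq_of_le {Θ : Set (PF E I)} {F : PF E I → PF E O}
    (hF : IsExtFun Θ F) (hc : Consistent Θ F) {k h : PF E I} (hk : k ∈ Ext Θ) (hΘ : h ∈ Θ)
    (hle : le h k) {ω : E} (hω : ω ∈ dom h) : F h ω = F k ω :=
  hc k hk h (mem_Ext_of_mem hΘ) hle ω ((hF.isSome_iff (mem_Ext_of_mem hΘ) ω).mpr hω)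

theorem constr_of_le {Θ : Set (PF E I)} {k h h' : PF E I} {ω : E} (hk : k ∈ Ext Θ)
    (hΘ : h ∈ Θ) (h'Θ : h' ∈ Θ) (htip : ω ∈ tips Θ h) (htip' : ω ∈ tips Θ h')
    (hle : le h k) (hle' : le h' k) : Constr Θ ω h h' :=
  ⟨hΘ, h'Θ, htip, htip', fun _ hG hGc =>
    (hGc.apply_eq_of_le hG hk hΘ hle htip.1).trans
      (hGc.apply_eq_of_le hG hk h'Θ hle' htip'.1).symm⟩

theorem Constr.apply_eq {Θ : Set (PF E I)} {F : PF E I → PF E O} (hF : IsExtFun Θ F)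
    (hc : Consistent Θ F) {ω : E} {h h' : PF E I} (hconstr : Constr Θ ω h h') :
    F h ω = F h' ω := by
  classical
  obtain ⟨hΘ, h'Θ, htip, htip', hall⟩ := hconstr
  let test : ∀ ω', O ω' → Bool := fun ω' y => decide (some y = F h ω')
  have htest := hall (mapOutputs test F) (hF.mapOutputs test) (hc.mapOutputs test)
  obtain ⟨a, ha⟩ := Option.isSome_iff_exists.mp
    ((hF.isSome_iff (mem_Ext_of_mem hΘ) ω).mpr htip.1)
  obtain ⟨b, hb⟩ := Option.isSome_iff_exists.mp
    ((hF.isSome_iff (mem_Ext_of_mem h'Θ) ω).mpr htip'.1)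
  simp only [mapOutputs, test, ha, hb, Option.map_some, decide_true, Option.some.injEq,
    Bool.true_eq, decide_eq_true_eq] at htest
  rw [ha, hb, htest]

theorem extCF_le_extCF {Θ : Set (PF E I)} {f : PF E I → PF E O} (hf : IsCausFun Θ f)
    {k k' : PF E I} (hk : k ∈ Ext Θ) (hle : le k' k) : le (extCF Θ f k') (extCF Θ f k) := by
  intro ω hs
  unfold extCF at hs ⊢
  by_cases hex' : ∃ h, h ∈ Θ ∧ le h k' ∧ ω ∈ tips Θ h
  · obtain ⟨hΘ, hle', htip⟩ := hex'.choose_spec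
    have hex : ∃ h, h ∈ Θ ∧ le h k ∧ ω ∈ tips Θ h := ⟨_, hΘ, hle'.trans hle, htip⟩
    obtain ⟨h₂Θ, h₂le, h₂tip⟩ := hex.choose_spec
    rw [dif_pos hex', dif_pos hex]
    exact hf.2 ω _ _ (constr_of_le hk hΘ h₂Θ htip h₂tip (hle'.trans hle) h₂le)
  · simp [dif_neg hex'] at hs

theorem primeCF_mem_causFunSet {Θ : Set (PF E I)} {F : PF E I → PF E O} (hF : IsExtFun Θ F)
    (hc : Consistent Θ F) : primeCF Θ F ∈ CausFunSet Θ O := by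
  refine ⟨⟨fun h hΘ => ?_, fun ω h h' hconstr => ?_⟩, fun h hΘ ω => if_neg (hΘ ·.1)⟩
  · ext ω
    by_cases htip : ω ∈ tips Θ h
    · simpa [dom, primeCF, hΘ, htip] using (hF.isSome_iff (mem_Ext_of_mem hΘ) ω).mpr htip.1
    · simp [dom, primeCF, htip]
  · simp only [primeCF, if_pos (⟨hconstr.1, hconstr.2.2.1⟩ : h ∈ Θ ∧ ω ∈ tips Θ h),
      if_pos (⟨hconstr.2.1, hconstr.2.2.2.1⟩ : h' ∈ Θ ∧ ω ∈ tips Θ h')]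
    exact hconstr.apply_eq hF hc

theorem extCF_primeCF [Finite E] {Θ : Set (PF E I)} {F : PF E I → PF E O}
    (hF : IsExtFun Θ F) (hc : Consistent Θ F) {k : PF E I} (hk : k ∈ Ext Θ) :
    extCF Θ (primeCF Θ F) k = F k := by
  funext ω
  unfold extCF
  by_cases hex : ∃ h, h ∈ Θ ∧ le h k ∧ ω ∈ tips Θ h
  · obtain ⟨hΘ, hle, htip⟩ := hex.choose_spec
    rw [dif_pos hex, primeCF, if_pos ⟨hΘ, htip⟩]
    exact hc.apply_eq_of_le hF hk hΘ hle htip.1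
  · have hω : ω ∉ dom k := fun hω => hex (exists_le_mem_tips_of_mem_Ext hk hω)
    have hnone : ¬ (F k ω).isSome := fun hs => hω ((hF.isSome_iff hk ω).mp hs)
    rw [dif_neg hex, Option.not_isSome_iff_eq_none.mp hnone]

theorem continuous_lowerTopology_iff {α β : Type} {r : α → α → Prop} {s : β → β → Prop}
    (hrefl : ∀ b, s b b) (htrans : ∀ {a b c : β}, s a b → s b c → s a c) (f : α → β) :
    @Continuous α β (lowerTopology r) (lowerTopology s) f ↔ ∀ x y, r y x → s (f y) (f x) := by
  let _ : TopologicalSpace α := lowerTopology r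
  let _ : TopologicalSpace β := lowerTopology s
  refine ⟨fun hf x y hyx => ?_, fun hmono => ⟨fun U hU x hx y hyx => hU _ hx _ (hmono x y hyx)⟩⟩
  have hopen : IsOpen {b | s b (f x)} := fun _ ha _ hb => htrans hb ha
  exact hf.isOpen_preimage _ hopen x (hrefl _) y hyx

theorem stmt12_general {E : Type} [Fintype E] {I O : E → Type}
    (Θ : Set (PF E I))
    (F : PF E I → PF E O) (hF : IsExtFun Θ F) :
    (∃ f ∈ CausFunSet Θ O, ∀ k ∈ Ext Θ, extCF Θ f k = F k) ↔
    @Continuous (↥(Ext Θ)) (PF E O)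
      (lowerTopology (fun a b : ↥(Ext Θ) => le a.1 b.1))
      (lowerTopology (fun a b : PF E O => le a b))
      (fun k : ↥(Ext Θ) => F k.1) := by
  rw [continuous_lowerTopology_iff le.refl le.trans]
  constructor
  · rintro ⟨f, ⟨hf, -⟩, hfF⟩ k k' hle
    simpa only [hfF k k.2, hfF k' k'.2] using extCF_le_extCF hf k.2 hle
  · intro hmono
    have hc : Consistent Θ F := fun k hk k' hk' hle => hmono ⟨k, hk⟩ ⟨k', hk'⟩ hle
    exact ⟨primeCF Θ F, primeCF_mem_causFunSet hF hc, fun k hk => extCF_primeCF hF hc hk⟩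

/-- an extended function is an extended causal function iff it is
continuous as a map from `Ext Θ` to the partial output functions, both carrying the
lowerset topology. -/
theorem stmt12 {E : Type} [Fintype E] {I O : E → Type}
    [∀ ω, Nonempty (I ω)] [∀ ω, Nonempty (O ω)]
    (Θ : Set (PF E I)) (hS : IsSpace Θ)
    (F : PF E I → PF E O) (hF : IsExtFun Θ F) :
    (∃ f ∈ CausFunSet Θ O, ∀ k ∈ Ext Θ, extCF Θ f k = F k) ↔
    @Continuous (↥(Ext Θ)) (PF E O)
      (lowerTopology (fun a b : ↥(Ext Θ) => le a.1 b.1))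
      (lowerTopology (fun a b : PF E O => le a b))
      (fun k : ↥(Ext Θ) => F k.1) :=
  stmt12_general Θ F hF

end Caus
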